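/- Let Γ be the Petersen graph realized as the Kneser graph KG_{5,2} with vertex set V(Γ) enumerated as v_1,…,v_{10}, edge set E(Γ), and adjacency matrix A_Γ (so A_Γ(u,w) = 1 if u ∼ w and 0 otherwise). Let W = ℂ^{V(Γ)} with basis (e_v)_{v∈V(Γ)}. Define the rank-10 tensor S̃ ∈ W^{⊗10} by S̃ = Σ_{(i_1,…,i_{10}) ∈ V(Γ)^{10}} (Π_{(j,k): {v_j,v_k} ∈ E(Γ)} A_Γ(i_j, i_k)) · e_{i_1}⊗⋯⊗e_{i_{10}}. Then S̃ = Σ_{g ∈ S_5} e_{g·v_1}⊗e_{g·v_2}⊗⋯⊗e_{g·v_{10}}; i.e., the tensor built from the Petersen graph by placing GHZ tensors at vertices and the adjacency tensor on edges equals the molecule S of the group-action model. -/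

import Mathlib

/-!
Evaluated at a multi-index `i`, `S̃` is `1` exactly when `v t ↦ i t` is an endomorphism of the
Petersen graph and `0` otherwise, while the molecule is the indicator of the maps `v t ↦ g • v t`,
each hit once since `S_5` acts faithfully. So the theorem says that every endomorphism of the
Petersen graph is induced by a permutation of `{1,…,5}`. An endomorphism is injective (a path of
length 3 between non-adjacent vertices would close up to a triangle) and reflects adjacency (a
common neighbour would give a triangle). Hence it maps independent 4-sets to independent 4-sets,
and these are exactly the stars `{a | x ∈ a}`; the induced map on the points `x` is the
permutation.
-/

noncomputable section

/-- Vertices of the Kneser graph `KG_{5,2}`: the 2-element subsets of `{1,…,5}`. -/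
abbrev KVertex : Type := {s : Finset (Fin 5) // s.card = 2}

/-- The Petersen graph, realized as the Kneser graph `KG_{5,2}`:
two 2-element subsets are adjacent iff they are disjoint. -/
def petersen : SimpleGraph KVertex where
  Adj u v := Disjoint u.1 v.1
  symm := ⟨fun _ _ h => h.symm⟩
  loopless := ⟨by
    intro v h
    have hv := v.2
    rw [disjoint_self.mp h] at hv
    simp at hv⟩

instance : DecidableRel petersen.Adj :=
  fun u v => inferInstanceAs (Decidable (Disjoint u.1 v.1))

/-- The action of `S_5` on the vertices: `g • {a,b} = {g a, g b}`. -/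
instance : SMul (Equiv.Perm (Fin 5)) KVertex :=
  ⟨fun g v => ⟨v.1.image g, by rw [Finset.card_image_of_injective _ g.injective]; exact v.2⟩⟩

instance : MulAction (Equiv.Perm (Fin 5)) KVertex where
  one_smul v := by
    apply Subtype.ext
    show v.1.image ⇑(1 : Equiv.Perm (Fin 5)) = v.1
    simp
  mul_smul g h v := by
    apply Subtype.ext
    show v.1.image ⇑(g * h) = (v.1.image ⇑h).image ⇑g
    rw [Finset.image_image]
    rfl

/-- `W^{⊗n}` for `W = ℂ^{V(Γ)}`, realized via multi-index coordinates. -/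
abbrev TensK (n : ℕ) := (Fin n → KVertex) → ℂ

/-- The adjacency matrix of the Petersen graph: `A_Γ(u,w) = 1` if `u ∼ w`, else `0`. -/
def adjMat (u w : KVertex) : ℂ := if petersen.Adj u w then 1 else 0

/-- Given an enumeration `v : Fin 10 ≃ V(Γ)` of the vertices, the rank-10 tensor
`S̃ = Σ_{(i_1,…,i_{10})} (Π_{(j,k) : {v_j,v_k} ∈ E(Γ)} A_Γ(i_j,i_k)) e_{i_1}⊗⋯⊗e_{i_{10}}`
built from the Petersen graph by placing GHZ tensors at vertices and the adjacency
tensor on edges (each edge `{v_j, v_k}` counted once, via `j < k`). -/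
def Stilde (v : Fin 10 ≃ KVertex) : TensK 10 :=
  fun i => ∏ j : Fin 10, ∏ k : Fin 10,
    if j < k ∧ petersen.Adj (v j) (v k) then adjMat (i j) (i k) else 1

/-- The molecule `S = Σ_{g ∈ S_5} e_{g•v_1} ⊗ e_{g•v_2} ⊗ ⋯ ⊗ e_{g•v_{10}}`. -/
def moleculeK (v : Fin 10 ≃ KVertex) : TensK 10 :=
  ∑ g : Equiv.Perm (Fin 5), fun i => if i = (fun t => g • v t) then 1 else 0

lemma prod_prod_ite_lt_eq_boole {ι M₀ : Type*} [Fintype ι] [LinearOrder ι] [CommMonoidWithZero M₀]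
    {R P : ι → ι → Prop} [DecidableRel R] [DecidableRel P]
    (hR : ∀ j k, R j k → R k j) (hRirr : ∀ j, ¬ R j j) (hP : ∀ j k, P j k → P k j) :
    ∏ j, ∏ k, (if j < k ∧ R j k then (if P j k then (1 : M₀) else 0) else 1) =
      if ∀ j k, R j k → P j k then 1 else 0 := by
  have hfactor : ∀ j k, (if j < k ∧ R j k then (if P j k then (1 : M₀) else 0) else 1) =
      if (j < k ∧ R j k → P j k) then 1 else 0 := by
    intro j k
    by_cases hjk : j < k ∧ R j k <;> simp [hjk]
  simp_rw [hfactor, Fintype.prod_boole]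
  refine if_congr ⟨fun h j k hjk => ?_, fun h j k hjk => h j k hjk.2⟩ rfl rfl
  rcases lt_trichotomy j k with hlt | rfl | hgt
  · exact h j k ⟨hlt, hjk⟩
  · exact absurd hjk (hRirr j)
  · exact hP k j (h k j ⟨hgt, hR j k hjk⟩)

lemma Fintype.sum_ite_eq_of_injective {G X M : Type*} [Fintype G] [DecidableEq X] [AddCommMonoid M]
    {φ : G → X} (hφ : Function.Injective φ) (x : X) (m : M) :
    ∑ g, (if x = φ g then m else 0) = if ∃ g, x = φ g then m else 0 := by
  by_cases hx : ∃ g, x = φ g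
  · rw [if_pos hx]
    obtain ⟨g, rfl⟩ := hx
    rw [Finset.sum_eq_single g (fun b _ hb => if_neg (hφ.ne hb.symm)) (by simp), if_pos rfl]
  · push Not at hx
    simp [hx]

lemma KVertex.val_smul (g : Equiv.Perm (Fin 5)) (a : KVertex) : (g • a).1 = a.1.image g := rfl

lemma petersen_adj_smul_iff (g : Equiv.Perm (Fin 5)) {a b : KVertex} :
    petersen.Adj (g • a) (g • b) ↔ petersen.Adj a b :=
  Finset.disjoint_image g.injective

instance : FaithfulSMul (Equiv.Perm (Fin 5)) KVertex where
  eq_of_smul_eq_smul {g h} H := by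
    refine Equiv.ext fun x => ?_
    obtain ⟨y, z, hxy, hxz, hyz⟩ : ∃ y z : Fin 5, x ≠ y ∧ x ≠ z ∧ y ≠ z := by revert x; decide
    have hmem : ∀ a : KVertex, x ∈ a.1 → g x ∈ (h • a).1 := fun a hx =>
      H a ▸ Finset.mem_image_of_mem g hx
    have hy := hmem ⟨{x, y}, Finset.card_pair hxy⟩ (by simp)
    have hz := hmem ⟨{x, z}, Finset.card_pair hxz⟩ (by simp)
    simp only [KVertex.val_smul, Finset.image_insert, Finset.image_singleton, Finset.mem_insert,
      Finset.mem_singleton] at hy hz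
    rcases hy with hy | hy
    · exact hy
    · exact hz.resolve_right fun hz => hyz (h.injective (hy.symm.trans hz))

lemma petersen_not_adj_of_adj_of_adj :
    ∀ a b c : KVertex, petersen.Adj a b → petersen.Adj b c → ¬ petersen.Adj a c := by
  decide

lemma petersen_exists_adj_adj_of_not_adj :
    ∀ a b : KVertex, a ≠ b → ¬ petersen.Adj a b → ∃ c, petersen.Adj a c ∧ petersen.Adj c b := by
  decide

lemma petersen_exists_adj_adj_adj_of_not_adj :
    ∀ a b : KVertex, a ≠ b → ¬ petersen.Adj a b →
      ∃ c d, petersen.Adj a c ∧ petersen.Adj c d ∧ petersen.Adj d b := by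
  decide

def kneserStar (x : Fin 5) : Finset KVertex := {a | x ∈ a.1}

lemma card_kneserStar : ∀ x, (kneserStar x).card = 4 := by decide

lemma kneserStar_injective : Function.Injective kneserStar := by
  unfold Function.Injective; decide

lemma petersen_not_adj_of_mem_kneserStar {x : Fin 5} {a b : KVertex}
    (ha : a ∈ kneserStar x) (hb : b ∈ kneserStar x) : ¬ petersen.Adj a b := by
  simp only [kneserStar, Finset.mem_filter, Finset.mem_univ, true_and] at ha hb
  exact fun hab => Finset.disjoint_left.mp hab ha hb

-- The equality case of the Erdős–Ko–Rado theorem for `KG_{5,2}`.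
set_option maxRecDepth 5000 in
lemma exists_eq_kneserStar_of_card_eq_four :
    ∀ s : Finset KVertex, s.card = 4 → (∀ a ∈ s, ∀ b ∈ s, ¬ petersen.Adj a b) →
      ∃ x, s = kneserStar x := by
  decide

section Hom

variable (φ : petersen →g petersen)

lemma petersen_hom_injective : Function.Injective φ := by
  intro a b hab
  by_contra hne
  by_cases hadj : petersen.Adj a b
  · exact petersen.loopless.irrefl _ (hab ▸ φ.map_adj hadj)
  · obtain ⟨c, d, hac, hcd, hdb⟩ := petersen_exists_adj_adj_adj_of_not_adj a b hne hadj
    exact petersen_not_adj_of_adj_of_adj _ _ _ (φ.map_adj hac) (φ.map_adj hcd)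
      (hab ▸ (φ.map_adj hdb).symm)

lemma petersen_hom_adj_iff {a b : KVertex} : petersen.Adj (φ a) (φ b) ↔ petersen.Adj a b := by
  refine ⟨fun h => ?_, φ.map_adj⟩
  by_contra hab
  have hne : a ≠ b := by rintro rfl; exact petersen.loopless.irrefl _ h
  obtain ⟨c, hac, hcb⟩ := petersen_exists_adj_adj_of_not_adj a b hne hab
  exact petersen_not_adj_of_adj_of_adj _ _ _ (φ.map_adj hac) (φ.map_adj hcb) h

lemma petersen_hom_exists_image_kneserStar (x : Fin 5) :
    ∃ y, (kneserStar x).image φ = kneserStar y := by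
  refine exists_eq_kneserStar_of_card_eq_four _ ?_ ?_
  · rw [Finset.card_image_of_injective _ (petersen_hom_injective φ), card_kneserStar]
  · simp only [Finset.mem_image]
    rintro _ ⟨a, ha, rfl⟩ _ ⟨b, hb, rfl⟩
    rw [petersen_hom_adj_iff]
    exact petersen_not_adj_of_mem_kneserStar ha hb

lemma petersen_hom_exists_perm : ∃ g : Equiv.Perm (Fin 5), ∀ a, φ a = g • a := by
  choose σ hσ using petersen_hom_exists_image_kneserStar φ
  have hσinj : Function.Injective σ := fun x y hxy => kneserStar_injective <|
    Finset.image_injective (petersen_hom_injective φ) (by rw [hσ, hσ, hxy])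
  have hmem : ∀ x a, x ∈ a.1 → σ x ∈ (φ a).1 := by
    intro x a hx
    have : φ a ∈ kneserStar (σ x) := hσ x ▸ Finset.mem_image_of_mem φ (by simpa [kneserStar])
    simpa [kneserStar] using this
  refine ⟨Equiv.ofBijective σ (Finite.injective_iff_bijective.mp hσinj), fun a => ?_⟩
  obtain ⟨x, y, hxy, ha⟩ := Finset.card_eq_two.mp a.2
  apply Subtype.ext
  rw [KVertex.val_smul, ha, Finset.image_insert, Finset.image_singleton]
  simp only [Equiv.ofBijective_apply]
  refine (Finset.eq_of_subset_of_card_le ?_ ?_).symm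
  · simp only [Finset.insert_subset_iff, Finset.singleton_subset_iff]
    exact ⟨hmem x a (by simp [ha]), hmem y a (by simp [ha])⟩
  · rw [(φ a).2, Finset.card_pair (hσinj.ne hxy)]

end Hom

lemma Stilde_apply (v : Fin 10 ≃ KVertex) (i : Fin 10 → KVertex) :
    Stilde v i = if ∀ j k, petersen.Adj (v j) (v k) → petersen.Adj (i j) (i k) then 1 else 0 := by
  simp only [Stilde, adjMat]
  convert prod_prod_ite_lt_eq_boole (R := fun j k => petersen.Adj (v j) (v k))
    (P := fun j k => petersen.Adj (i j) (i k)) (fun _ _ h => h.symm)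
    (fun _ => petersen.loopless.irrefl _) (fun _ _ h => h.symm)

lemma moleculeK_apply (v : Fin 10 ≃ KVertex) (i : Fin 10 → KVertex) :
    moleculeK v i = if ∃ g : Equiv.Perm (Fin 5), i = fun t => g • v t then 1 else 0 := by
  have hinj : Function.Injective fun (g : Equiv.Perm (Fin 5)) t => g • v t := fun g h H =>
    eq_of_smul_eq_smul fun a => by simpa using congrFun H (v.symm a)
  rw [moleculeK, Finset.sum_apply]
  exact Fintype.sum_ite_eq_of_injective hinj i 1

lemma forall_adj_imp_adj_iff_exists_perm {ι : Type*} (v : ι ≃ KVertex) (i : ι → KVertex) :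
    (∀ j k, petersen.Adj (v j) (v k) → petersen.Adj (i j) (i k)) ↔
      ∃ g : Equiv.Perm (Fin 5), i = fun t => g • v t := by
  constructor
  · intro h
    obtain ⟨g, hg⟩ := petersen_hom_exists_perm
      ⟨i ∘ v.symm, fun {a b} hab => h (v.symm a) (v.symm b) (by simpa using hab)⟩
    exact ⟨g, funext fun t => by simpa using hg (v t)⟩
  · rintro ⟨g, rfl⟩ j k hjk
    exact (petersen_adj_smul_iff g).2 hjk

/-- For any enumeration `v_1, …, v_{10}` of the vertices of the
Petersen graph, the tensor `S̃` built from the Petersen graph (GHZ tensors at vertices,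
adjacency tensor on edges) equals the molecule `S` of the group-action model:
`S̃ = Σ_{g ∈ S_5} e_{g•v_1} ⊗ ⋯ ⊗ e_{g•v_{10}}`. -/
theorem Stilde_eq_molecule (v : Fin 10 ≃ KVertex) :
    Stilde v = moleculeK v := by
  funext i
  rw [Stilde_apply, moleculeK_apply]
  exact if_congr (forall_adj_imp_adj_iff_exists_perm v i) rfl rfl

end
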